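/- Let η ∈ ℝ with η ≠ 0, and let u, v : U → ℝ be smooth functions on an open set U ⊆ ℝ² satisfying u_{xt} = 2e^{u − v_x}, v_{xt} = u_x·e^{u + v_x} on U. Define F₁₁ = −(√2/2)u_x, F₂₁ = η, F₃₁ = −η√2 + e^{−v_x}, F₁₂ = 0, F₂₂ = √2·e^{u}, F₃₂ = −2e^{u}. Then on U the structure equations with δ = 1 hold: −∂_t F₁₁ + ∂_x F₁₂ = F₃₁F₂₂ − F₃₂F₂₁, −∂_t F₂₁ + ∂_x F₂₂ = F₁₁F₃₂ − F₁₂F₃₁, −∂_t F₃₁ + ∂_x F₃₂ = F₁₁F₂₂ − F₁₂F₂₁; hence this system describes pseudospherical surfaces with these associated functions. -/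

import Mathlib

open Real

/-- Partial derivative in the `x` direction of a function on the `(x, t)` plane. -/
noncomputable def pdx (f : ℝ × ℝ → ℝ) (p : ℝ × ℝ) : ℝ := fderiv ℝ f p (1, 0)

/-- Partial derivative in the `t` direction of a function on the `(x, t)` plane. -/
noncomputable def pdt (f : ℝ × ℝ → ℝ) (p : ℝ × ℝ) : ℝ := fderiv ℝ f p (0, 1)

/-- The structure equations of a surface of constant Gaussian curvature `-δ`. -/
def StructEqs (δ : ℝ) (U : Set (ℝ × ℝ)) (F11 F12 F21 F22 F31 F32 : ℝ × ℝ → ℝ) : Prop :=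
  ∀ p ∈ U,
    -(pdt F11 p) + pdx F12 p = F31 p * F22 p - F32 p * F21 p ∧
    -(pdt F21 p) + pdx F22 p = F11 p * F32 p - F12 p * F31 p ∧
    -(pdt F31 p) + pdx F32 p = δ * (F11 p * F22 p - F12 p * F21 p)

/-! The `η`-terms cancel in the first structure equation, which is then the first equation of
the system; the second structure equation is an identity, and the third is the second equation of
the system multiplied by `e^{-v_x}`. -/

section PartialDerivatives

variable {f : ℝ × ℝ → ℝ} {p : ℝ × ℝ}

lemma pdx_const (c : ℝ) : pdx (fun _ => c) p = 0 := by
  simp [pdx]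

lemma pdt_const (c : ℝ) : pdt (fun _ => c) p = 0 := by
  simp [pdt]

lemma pdx_const_mul (c : ℝ) (hf : DifferentiableAt ℝ f p) :
    pdx (fun q => c * f q) p = c * pdx f p := by
  simp [pdx, fderiv_const_mul hf]

lemma pdt_const_mul (c : ℝ) (hf : DifferentiableAt ℝ f p) :
    pdt (fun q => c * f q) p = c * pdt f p := by
  simp [pdt, fderiv_const_mul hf]

lemma pdt_const_add (c : ℝ) : pdt (fun q => c + f q) p = pdt f p := by
  simp [pdt, fderiv_const_add]

lemma pdt_neg : pdt (fun q => -f q) p = -pdt f p := by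
  simp [pdt, fderiv_fun_neg]

lemma pdx_exp (hf : DifferentiableAt ℝ f p) :
    pdx (fun q => exp (f q)) p = exp (f p) * pdx f p := by
  simp [pdx, fderiv_exp hf]

lemma pdt_exp (hf : DifferentiableAt ℝ f p) :
    pdt (fun q => exp (f q)) p = exp (f p) * pdt f p := by
  simp [pdt, fderiv_exp hf]

lemma differentiableAt_pdx (hf : ContDiffAt ℝ 2 f p) : DifferentiableAt ℝ (pdx f) p :=
  ((hf.fderiv_right (m := 1) (by norm_num)).clm_apply contDiffAt_const)
    |>.differentiableAt (by norm_num)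

end PartialDerivatives

theorem system_exeex2_describes_pss_general (η : ℝ)
    (U : Set (ℝ × ℝ)) (hU : IsOpen U)
    (u v : ℝ × ℝ → ℝ)
    (hu : ContDiffOn ℝ (⊤ : ℕ∞) u U) (hv : ContDiffOn ℝ (⊤ : ℕ∞) v U)
    (heq1 : ∀ p ∈ U, pdt (pdx u) p = 2 * Real.exp (u p - pdx v p))
    (heq2 : ∀ p ∈ U, pdt (pdx v) p = pdx u p * Real.exp (u p + pdx v p)) :
    StructEqs 1 U
      (fun q => -(Real.sqrt 2 / 2) * pdx u q)
      (fun _ => 0)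
      (fun _ => η)
      (fun q => Real.sqrt 2 * Real.exp (u q))
      (fun q => -(η * Real.sqrt 2) + Real.exp (-(pdx v q)))
      (fun q => -2 * Real.exp (u q)) := by
  intro p hp
  have contDiffAt_two {w : ℝ × ℝ → ℝ} (hw : ContDiffOn ℝ (⊤ : ℕ∞) w U) :
      ContDiffAt ℝ 2 w p :=
    ((hw p hp).contDiffAt (hU.mem_nhds hp)).of_le (WithTop.coe_le_coe.mpr le_top)
  have hu₁ : DifferentiableAt ℝ u p := (contDiffAt_two hu).differentiableAt (by norm_num)
  have hux := differentiableAt_pdx (contDiffAt_two hu)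
  have hvx := differentiableAt_pdx (contDiffAt_two hv)
  have hsqrt : √2 * √2 = 2 := mul_self_sqrt (by norm_num)
  have hexp : exp (-pdx v p) * exp (pdx v p) = 1 := by
    rw [← exp_add, neg_add_cancel, exp_zero]
  refine ⟨?_, ?_, ?_⟩
  · rw [pdt_const_mul _ hux, pdx_const, heq1 p hp, sub_eq_add_neg, exp_add]
    linear_combination η * exp (u p) * hsqrt
  · rw [pdt_const, pdx_const_mul _ hu₁.exp, pdx_exp hu₁]
    ring
  · rw [pdt_const_add, pdt_exp hvx.fun_neg, pdt_neg, pdx_const_mul _ hu₁.exp, pdx_exp hu₁,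
      heq2 p hp, exp_add]
    linear_combination exp (u p) * pdx u p * hexp + exp (u p) * pdx u p / 2 * hsqrt

/-- The system `u_xt = 2e^{u − v_x}`, `v_xt = u_x e^{u + v_x}`
describes pseudospherical surfaces. -/
theorem system_exeex2_describes_pss (η : ℝ) (hη : η ≠ 0)
    (U : Set (ℝ × ℝ)) (hU : IsOpen U)
    (u v : ℝ × ℝ → ℝ)
    (hu : ContDiffOn ℝ (⊤ : ℕ∞) u U) (hv : ContDiffOn ℝ (⊤ : ℕ∞) v U)
    (heq1 : ∀ p ∈ U, pdt (pdx u) p = 2 * Real.exp (u p - pdx v p))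
    (heq2 : ∀ p ∈ U, pdt (pdx v) p = pdx u p * Real.exp (u p + pdx v p)) :
    StructEqs 1 U
      (fun q => -(Real.sqrt 2 / 2) * pdx u q)
      (fun _ => 0)
      (fun _ => η)
      (fun q => Real.sqrt 2 * Real.exp (u q))
      (fun q => -(η * Real.sqrt 2) + Real.exp (-(pdx v q)))
      (fun q => -2 * Real.exp (u q)) :=
  system_exeex2_describes_pss_general η U hU u v hu hv heq1 heq2
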